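/- Let G be an equitably k-colorable graph on n vertices with k dividing n, and let H be an r-partite graph with r ≤ k−1. Then for every l ≥ 1, χ_=(G ∘^l H) ≤ k. -/

import Mathlib

open SimpleGraph Finset

/-- The corona `G ∘ H` of two graphs: one copy of `G` and `|V(G)|` copies of `H`,
the `i`-th vertex of `G` being joined to every vertex of the `i`-th copy of `H`. -/
def SimpleGraph.corona {α β : Type*} (G : SimpleGraph α) (H : SimpleGraph β) :
    SimpleGraph (α ⊕ α × β) where
  Adj x y :=
    match x, y with
    | Sum.inl u, Sum.inl v => G.Adj u v
    | Sum.inl u, Sum.inr (v, _) => u = v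
    | Sum.inr (u, _), Sum.inl v => u = v
    | Sum.inr (u, a), Sum.inr (v, b) => u = v ∧ H.Adj a b
  symm := by
    refine ⟨?_⟩
    rintro (u | ⟨u, a⟩) (v | ⟨v, b⟩) h
    · exact h.symm
    · exact h.symm
    · exact h.symm
    · exact ⟨h.1.symm, h.2.symm⟩
  loopless := by
    refine ⟨?_⟩
    rintro (u | ⟨u, a⟩) h
    · exact G.loopless.irrefl u h
    · exact H.loopless.irrefl a h.2

universe u

/-- Vertex type of the `l`-fold corona `G ∘^l H` (with `l = 0` giving `G` itself). -/
def coronaType (α β : Type u) : ℕ → Type u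
  | 0 => α
  | l + 1 => coronaType α β l ⊕ coronaType α β l × β

instance coronaType.fintype (α β : Type u) [Fintype α] [Fintype β] :
    ∀ l, Fintype (coronaType α β l)
  | 0 => inferInstanceAs (Fintype α)
  | l + 1 =>
    letI := coronaType.fintype α β l
    inferInstanceAs (Fintype (coronaType α β l ⊕ coronaType α β l × β))

/-- The `l`-fold corona `G ∘^l H`, defined by `G ∘^0 H = G` and
`G ∘^(l+1) H = (G ∘^l H) ∘ H`. -/
def coronaPow {α β : Type u} (G : SimpleGraph α) (H : SimpleGraph β) :
    ∀ l, SimpleGraph (coronaType α β l)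
  | 0 => G
  | l + 1 => (coronaPow G H l).corona H

/-- The canonical copy of a vertex of `G` inside `G ∘^l H`. -/
def coronaBase {α : Type u} (β : Type u) : ∀ l, α → coronaType α β l
  | 0 => id
  | l + 1 => fun a => Sum.inl (coronaBase β l a)

/-- `c` is an equitable `k`-coloring of `G`: it is proper and any two color classes
differ in size by at most one. -/
def SimpleGraph.IsEquitableColoring {V : Type*} [Fintype V] (G : SimpleGraph V) {k : ℕ}
    (c : V → Fin k) : Prop :=
  (∀ ⦃u v⦄, G.Adj u v → c u ≠ c v) ∧
    ∀ i j : Fin k,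
      (Finset.univ.filter fun v => c v = i).card ≤
        (Finset.univ.filter fun v => c v = j).card + 1

/-- `G` is equitably `k`-colorable. -/
def SimpleGraph.EquitablyColorable {V : Type*} [Fintype V] (G : SimpleGraph V) (k : ℕ) : Prop :=
  ∃ c : V → Fin k, G.IsEquitableColoring c

/-- The equitable chromatic number: the least `k` such that `G` is equitably `k`-colorable. -/
noncomputable def SimpleGraph.equitableChromaticNumber {V : Type*} [Fintype V]
    (G : SimpleGraph V) : ℕ :=
  sInf {k | G.EquitablyColorable k}

/-- The maximum degree of a finite graph (no decidability assumptions). -/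
noncomputable def SimpleGraph.maxDeg {V : Type*} [Fintype V] (G : SimpleGraph V) : ℕ :=
  Finset.univ.sup fun v => (G.neighborSet v).ncard

/-!
When `k ∣ |V(G)|`, an equitable `k`-coloring of `G` has all its classes of the same size `m`.
Read the colors as `ℤ/k` and fix a proper coloring `d` of `H` with values in `{1, …, k-1}`
(possible since `H` is `(k-1)`-partite). Coloring a copy vertex `(u, b)` of the corona with
`c u + d b` never repeats the color of `u`, and for each `b` it translates the classes of `c`, so
all classes of `G ∘ H` again have the same size `m (1 + |V(H)|)`. Iterating gives an equitable
`k`-coloring of every `G ∘^l H`.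
-/

theorem Fintype.eq_of_sum_eq_card_mul_of_le_add_one {ι : Type*} [Fintype ι] {a : ι → ℕ} {m : ℕ}
    (h : ∀ i j, a i ≤ a j + 1) (hsum : ∑ i, a i = Fintype.card ι * m) (i : ι) : a i = m := by
  have hle : ∀ i, a i ≤ m := by
    intro i
    by_contra! hi
    have hlt : ∑ _j : ι, m < ∑ j, a j :=
      Finset.sum_lt_sum (fun j _ => by have := h i j; omega) ⟨i, Finset.mem_univ i, hi⟩
    rw [Finset.sum_const, Finset.card_univ, smul_eq_mul, hsum] at hlt
    exact lt_irrefl _ hlt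
  refine (Finset.sum_eq_sum_iff_of_le fun j _ => hle j).mp ?_ i (Finset.mem_univ i)
  rw [hsum, Finset.sum_const, Finset.card_univ, smul_eq_mul]

namespace SimpleGraph

variable {V : Type*} [Fintype V] {G : SimpleGraph V}

theorem IsEquitableColoring.card_fiber_eq {k : ℕ} {c : V → Fin k} (hc : G.IsEquitableColoring c)
    (hdvd : k ∣ Fintype.card V) (j : Fin k) : #{v | c v = j} = Fintype.card V / k := by
  refine Fintype.eq_of_sum_eq_card_mul_of_le_add_one hc.2 ?_ j
  rw [← Finset.card_eq_sum_card_fiberwise fun v _ => Finset.mem_univ (c v), Finset.card_univ,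
    Fintype.card_fin, Nat.mul_div_cancel' hdvd]

theorem isEquitableColoring_of_card_fiber_eq {k m : ℕ} (C : G.Coloring (Fin k))
    (hC : ∀ j, #{v | C v = j} = m) : G.IsEquitableColoring C :=
  ⟨fun _ _ hadj => C.valid hadj, fun i j => by rw [hC i, hC j]; omega⟩

theorem equitablyColorable_zero_of_isEmpty [IsEmpty V] (G : SimpleGraph V) : G.EquitablyColorable 0 :=
  ⟨isEmptyElim, fun u => isEmptyElim u, fun i => i.elim0⟩

theorem Colorable.exists_coloring_ne_zero {β : Type*} {H : SimpleGraph β} {r k : ℕ}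
    (hH : H.Colorable r) (hr : r ≤ k) : ∃ C : H.Coloring (Fin (k + 1)), ∀ b, C b ≠ 0 := by
  obtain ⟨C⟩ := hH
  exact ⟨recolorOfEmbedding H ((Fin.castLEEmb hr).trans (Fin.succEmb k)) C,
    fun b => Fin.succ_ne_zero _⟩

end SimpleGraph

theorem coronaType.isEmpty (α β : Type u) [IsEmpty α] :
    ∀ l, IsEmpty (coronaType α β l)
  | 0 => ‹IsEmpty α›
  | l + 1 =>
    have ih := coronaType.isEmpty α β l
    isEmpty_sum.2 ⟨ih, isEmpty_prod.2 (.inl ih)⟩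

namespace SimpleGraph.Coloring

variable {α β : Type u} {K : Type*} [AddGroup K] {G : SimpleGraph α} {H : SimpleGraph β}

def corona (cG : G.Coloring K) (cH : H.Coloring K) (hcH : ∀ b, cH b ≠ 0) :
    (G.corona H).Coloring K :=
  Coloring.mk (Sum.elim cG fun p => cG p.1 + cH p.2) <| by
    rintro (u | ⟨u, a⟩) (v | ⟨v, b⟩) hadj
    · exact cG.valid hadj
    · obtain rfl : u = v := hadj
      simpa [eq_comm] using hcH b
    · obtain rfl : u = v := hadj
      simpa using hcH a
    · obtain ⟨rfl, hab⟩ := hadj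
      simpa using cH.valid hab

variable [Fintype α] [Fintype β] [DecidableEq K]

theorem card_fiber_corona {m : ℕ} (cG : G.Coloring K) (cH : H.Coloring K) (hcH : ∀ b, cH b ≠ 0)
    (hm : ∀ j, #{u | cG u = j} = m) (j : K) :
    #{v | cG.corona cH hcH v = j} = m * (1 + Fintype.card β) := by
  have hcopies : #{p : α × β | cG p.1 + cH p.2 = j} = Fintype.card β * m := by
    rw [Finset.card_filter, Fintype.sum_prod_type_right]
    simp_rw [← eq_sub_iff_add_eq, ← Finset.card_filter, hm]
    simp
  rw [Finset.card_filter, Fintype.sum_sum_type, ← Finset.card_filter, ← Finset.card_filter]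
  change #{u | cG u = j} + #{p : α × β | cG p.1 + cH p.2 = j} = _
  rw [hm, hcopies]
  ring

theorem exists_coronaPow {m : ℕ} (cG : G.Coloring K) (hm : ∀ j, #{u | cG u = j} = m)
    (cH : H.Coloring K) (hcH : ∀ b, cH b ≠ 0) (l : ℕ) :
    ∃ C : (coronaPow G H l).Coloring K, ∀ j, #{v | C v = j} = m * (1 + Fintype.card β) ^ l := by
  induction l with
  | zero => exact ⟨cG, fun j => by rw [pow_zero, mul_one]; exact hm j⟩
  | succ l ih =>
    obtain ⟨C, hC⟩ := ih
    refine ⟨C.corona cH hcH, fun j => ?_⟩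
    rw [pow_succ, ← mul_assoc]
    exact C.card_fiber_corona cH hcH hC j

end SimpleGraph.Coloring

theorem equitableChromaticNumber_coronaPow_rpartite_general
    {α β : Type} [Fintype α] [Fintype β] (G : SimpleGraph α) (H : SimpleGraph β)
    (k n r l : ℕ) (hn : Fintype.card α = n) (hG : G.EquitablyColorable k) (hdvd : k ∣ n)
    (hr : r ≤ k - 1) (hH : H.Colorable r) :
    (coronaPow G H l).equitableChromaticNumber ≤ k := by
  obtain ⟨c, hc⟩ := hG
  subst hn
  apply Nat.sInf_le
  cases k with
  | zero =>
    have : IsEmpty α := Function.isEmpty c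
    have := coronaType.isEmpty α β l
    exact equitablyColorable_zero_of_isEmpty _
  | succ k =>
    obtain ⟨cH, hcH⟩ := hH.exists_coloring_ne_zero (by omega : r ≤ k)
    obtain ⟨C, hC⟩ :=
      (Coloring.mk (G := G) c fun h => hc.1 h).exists_coronaPow (hc.card_fiber_eq hdvd) cH hcH l
    exact ⟨C, isEquitableColoring_of_card_fiber_eq C hC⟩

/-- If `G` is equitably `k`-colorable on `n` vertices with `k ∣ n`, and `H`
is `r`-partite with `r ≤ k-1`, then `χ₌(G ∘^l H) ≤ k` for all `l ≥ 1`. -/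
theorem equitableChromaticNumber_coronaPow_rpartite
    {α β : Type} [Fintype α] [Fintype β] (G : SimpleGraph α) (H : SimpleGraph β)
    (k n r l : ℕ) (hn : Fintype.card α = n) (hG : G.EquitablyColorable k) (hdvd : k ∣ n)
    (hr : r ≤ k - 1) (hH : H.Colorable r) (hl : 1 ≤ l) :
    (coronaPow G H l).equitableChromaticNumber ≤ k :=
  equitableChromaticNumber_coronaPow_rpartite_general G H k n r l hn hG hdvd hr hH
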